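/- arXiv:1910.00902 — 2 statements merged into one kernel-verified Lean document; each statement's English description precedes it below -/
import Mathlib

section
/- Under the hypotheses of the trilinear interpolation theorem, for all x₁, x₂, x₃ ∈ (X₁,X₂)_{θ,∞} and all t > 0 one has K(t, T(x₁,x₂,x₃), Y₁, Y₂) ≤ 3C₀ [ ‖x₁‖_{X₁} K(√t,x₂) K(√t,x₃) + K(√t,x₁)( ‖x₂‖_{X₁} K(√t,x₃) + ‖x₃‖_{X₁} K(√t,x₂) ) ], where K(·,xᵢ) = K(·,xᵢ,X₁,X₂). -/
/-!
Split each `xᵢ = aᵢ + bᵢ` and expand `T x₁ x₂ x₃` into eight terms. Terms with at most one `bᵢ`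
are bounded in `Y₁` by the first estimate, terms with two `bᵢ` by the `(Y₁, Y₂)_{1/2,∞}` estimate at
the cost of a factor `t^{1/2}`, and the term `T b₁ b₂ b₃` in `Y₂` at the cost of `t`. With
`s = t^{1/2}` and `Jᵢ = ‖aᵢ‖_{X₁} + s ‖bᵢ‖_{X₂}`, everything is controlled by the `Jᵢ` and by
`‖bᵢ‖_{X₁} ≤ ‖xᵢ‖_{X₁} + Jᵢ`. Choosing near-optimal splittings, `Jᵢ ≤ r K(s, xᵢ)` with `r ↓ 1`, and
using `K(s, xᵢ) ≤ ‖xᵢ‖_{X₁}` to absorb the cross terms gives the constant `3`.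

This multiplicative approximation breaks down when some `K(s, xᵢ)` vanishes; then the embedding
`X₂ ↪ X₁` gives `‖bᵢ‖_{X₁} ≲ s⁻¹ Jᵢ` instead, so the left side is `O(J₁ J₂ J₃)` and vanishes too.
At `t = ∞` the embedding gives `K(∞, ·) = ‖·‖_{X₁}` and the first estimate suffices.
-/
open MeasureTheory ENNReal
noncomputable section

/-- An extended-real-valued norm on an ambient real vector space; the associated
Banach space of an interpolation couple is the set where the norm is finite. -/
structure ENormC (V : Type*) [AddCommGroup V] [Module ℝ V] where
  e : V → ℝ≥0∞
  e_zero : e 0 = 0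
  e_add_le : ∀ v w, e (v + w) ≤ e v + e w
  e_smul : ∀ (c : ℝ) (v : V), e (c • v) = ‖c‖₊ * e v

variable {V : Type*} [AddCommGroup V] [Module ℝ V]

/-- The K-functional of the couple (X, Y). -/
noncomputable def Kfun (X Y : ENormC V) (t : ℝ≥0∞) (x : V) : ℝ≥0∞ :=
  ⨅ p : {p : V × V // p.1 + p.2 = x}, X.e p.1.1 + t * Y.e p.1.2

/-- The real interpolation norm of `(X,Y)_{θ,r}`, i.e. the `L^r((0,∞),dt/t)` norm
of `t ↦ t^{-θ} K(t,x)`. -/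
noncomputable def interpN (X Y : ENormC V) (θ : ℝ) (r : ℝ≥0∞) (x : V) : ℝ≥0∞ :=
  if r = ∞ then
    ⨆ t : {t : ℝ // 0 < t}, ENNReal.ofReal (t.1 ^ (-θ)) * Kfun X Y (ENNReal.ofReal t.1) x
  else
    (∫⁻ t in Set.Ioi (0 : ℝ),
        (ENNReal.ofReal (t ^ (-θ)) * Kfun X Y (ENNReal.ofReal t) x) ^ r.toReal *
          ENNReal.ofReal t⁻¹) ^ r.toReal⁻¹

open Filter Topology

theorem ENNReal.le_of_forall_one_lt_le_pow_mul {a b : ℝ≥0∞} (n : ℕ)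
    (h : ∀ r : ℝ≥0∞, 1 < r → r ≠ ⊤ → a ≤ r ^ n * b) : a ≤ b := by
  have hlim : Tendsto (fun r : ℝ≥0∞ => r ^ n * b) (𝓝[>] 1) (𝓝 b) := by
    simpa using ENNReal.Tendsto.mul_const
      (((ENNReal.continuous_pow n).tendsto 1).mono_left nhdsWithin_le_nhds) (Or.inl (by simp))
  refine ge_of_tendsto hlim ?_
  filter_upwards [Ioo_mem_nhdsGT one_lt_two] with r hr
  exact h r hr.1 (hr.2.trans_le le_top).ne

theorem ENNReal.cubic_le_three_mul {n₁ n₂ n₃ k₁ k₂ k₃ : ℝ≥0∞} (h₁ : k₁ ≤ n₁) (h₂ : k₂ ≤ n₂) :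
    k₁ * k₂ * k₃ + (n₁ + k₁) * k₂ * k₃ + (n₂ + k₂) * k₁ * k₃ + (n₃ + k₃) * k₁ * k₂ ≤
      3 * (n₁ * k₂ * k₃ + k₁ * (n₂ * k₃ + n₃ * k₂)) :=
  calc k₁ * k₂ * k₃ + (n₁ + k₁) * k₂ * k₃ + (n₂ + k₂) * k₁ * k₃ + (n₃ + k₃) * k₁ * k₂
      = n₁ * k₂ * k₃ + n₂ * k₁ * k₃ + n₃ * k₁ * k₂ + 2 * (k₁ * k₂ * k₃) + 2 * (k₂ * k₁ * k₃) := by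
        ring
    _ ≤ n₁ * k₂ * k₃ + n₂ * k₁ * k₃ + n₃ * k₁ * k₂ + 2 * (n₁ * k₂ * k₃) + 2 * (n₂ * k₁ * k₃) := by
        gcongr
    _ = 3 * (n₁ * k₂ * k₃ + n₂ * k₁ * k₃) + n₃ * k₁ * k₂ := by ring
    _ ≤ 3 * (n₁ * k₂ * k₃ + n₂ * k₁ * k₃) + 3 * (n₃ * k₁ * k₂) :=
        add_le_add le_rfl (le_mul_of_one_le_left' (by norm_num))
    _ = 3 * (n₁ * k₂ * k₃ + k₁ * (n₂ * k₃ + n₃ * k₂)) := by ring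

namespace ENormC

variable (X : ENormC V)

theorem e_neg (v : V) : X.e (-v) = X.e v := by
  simpa using X.e_smul (-1) v

theorem e_le_e_add_add (a b : V) : X.e b ≤ X.e (a + b) + X.e a :=
  calc X.e b = X.e ((a + b) + -a) := by rw [add_neg_cancel_comm]
    _ ≤ X.e (a + b) + X.e a := (X.e_add_le _ _).trans_eq (by rw [e_neg])

end ENormC

section Kfun

variable (X Y : ENormC V)

instance (x : V) : Nonempty {p : V × V // p.1 + p.2 = x} :=
  ⟨⟨(x, 0), add_zero x⟩⟩

theorem Kfun_le_of_add_eq (t : ℝ≥0∞) {a b x : V} (h : a + b = x) :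
    Kfun X Y t x ≤ X.e a + t * Y.e b :=
  iInf_le_of_le ⟨(a, b), h⟩ le_rfl

theorem exists_add_eq_lt_of_Kfun_lt {t c : ℝ≥0∞} {x : V} (h : Kfun X Y t x < c) :
    ∃ a b, a + b = x ∧ X.e a + t * Y.e b < c := by
  obtain ⟨⟨⟨a, b⟩, hab⟩, hlt⟩ := iInf_lt_iff.mp h
  exact ⟨a, b, hab, hlt⟩

theorem Kfun_le_left (t : ℝ≥0∞) (x : V) : Kfun X Y t x ≤ X.e x := by
  simpa [Y.e_zero] using Kfun_le_of_add_eq X Y t (add_zero x)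

theorem Kfun_le_right (t : ℝ≥0∞) (x : V) : Kfun X Y t x ≤ t * Y.e x := by
  simpa [X.e_zero] using Kfun_le_of_add_eq X Y t (zero_add x)

theorem Kfun_add_le (t : ℝ≥0∞) (x y : V) :
    Kfun X Y t (x + y) ≤ Kfun X Y t x + Kfun X Y t y := by
  refine ENNReal.le_iInf_add_iInf fun ⟨(a, b), hab⟩ ⟨(a', b'), hab'⟩ => ?_
  calc Kfun X Y t (x + y)
      ≤ X.e (a + a') + t * Y.e (b + b') :=
        Kfun_le_of_add_eq X Y t (by rw [← hab, ← hab']; abel)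
    _ ≤ X.e a + X.e a' + t * (Y.e b + Y.e b') := by
        gcongr
        exacts [X.e_add_le _ _, Y.e_add_le _ _]
    _ = X.e a + t * Y.e b + (X.e a' + t * Y.e b') := by ring

theorem Kfun_add_le_of_le {t α β : ℝ≥0∞} {x y : V} (hx : Kfun X Y t x ≤ α)
    (hy : Kfun X Y t y ≤ β) : Kfun X Y t (x + y) ≤ α + β :=
  (Kfun_add_le X Y t x y).trans (add_le_add hx hy)

theorem exists_add_eq_le_mul_Kfun {t r : ℝ≥0∞} {x : V} (hr : 1 < r) (h₀ : Kfun X Y t x ≠ 0)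
    (h : Kfun X Y t x ≠ ⊤) : ∃ a b, a + b = x ∧ X.e a + t * Y.e b ≤ r * Kfun X Y t x := by
  have hlt : Kfun X Y t x < r * Kfun X Y t x := by
    simpa [mul_comm] using ENNReal.mul_lt_mul_right h₀ h hr
  obtain ⟨a, b, hab, hJ⟩ := exists_add_eq_lt_of_Kfun_lt X Y hlt
  exact ⟨a, b, hab, hJ.le⟩

theorem Kfun_top (h : ∀ v, Y.e v = 0 → X.e v = 0) (x : V) : Kfun X Y ⊤ x = X.e x := by
  refine le_antisymm (Kfun_le_left X Y ⊤ x) (le_iInf fun ⟨(a, b), hab⟩ => ?_)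
  rcases eq_or_ne (Y.e b) 0 with hb | hb
  · calc X.e x = X.e (a + b) := by rw [hab]
      _ ≤ X.e a + X.e b := X.e_add_le a b
      _ = X.e a + ⊤ * Y.e b := by rw [h b hb, hb, mul_zero]
  · simp [ENNReal.top_mul hb]

theorem Kfun_le_rpow_mul_interpN {t : ℝ≥0∞} (ht₀ : t ≠ 0) (ht : t ≠ ⊤) (θ : ℝ) (x : V) :
    Kfun X Y t x ≤ t ^ θ * interpN X Y θ ⊤ x := by
  have hpos : 0 < t.toReal := ENNReal.toReal_pos ht₀ ht
  have hterm : t ^ (-θ) * Kfun X Y t x ≤ interpN X Y θ ⊤ x := by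
    rw [interpN, if_pos rfl]
    refine le_iSup_of_le ⟨t.toReal, hpos⟩ (le_of_eq ?_)
    rw [← ENNReal.ofReal_rpow_of_pos hpos, ENNReal.ofReal_toReal ht]
  calc Kfun X Y t x = t ^ θ * (t ^ (-θ) * Kfun X Y t x) := by
        rw [← mul_assoc, ← ENNReal.rpow_add _ _ ht₀ ht, add_neg_cancel, rpow_zero, one_mul]
    _ ≤ t ^ θ * interpN X Y θ ⊤ x := by gcongr

theorem Kfun_ne_top_of_interpN_ne_top {θ : ℝ} {x : V} (hx : interpN X Y θ ⊤ x ≠ ⊤)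
    {t : ℝ≥0∞} (ht₀ : t ≠ 0) (ht : t ≠ ⊤) : Kfun X Y t x ≠ ⊤ :=
  ne_top_of_le_ne_top (ENNReal.mul_ne_top (ENNReal.rpow_ne_top_of_ne_zero ht₀ ht) hx)
    (Kfun_le_rpow_mul_interpN X Y ht₀ ht θ x)

end Kfun

/-- The bound on `K(s², T(a₁ + b₁, a₂ + b₂, a₃ + b₃))` obtained by expanding `T` into its eight
terms; the factors `X₁.e aⱼ + s * X₂.e bⱼ` are the quantities whose infima are `K(s, aⱼ + bⱼ)`. -/
def splitBound (X₁ X₂ : ENormC V) (s : ℝ≥0∞) (a₁ b₁ a₂ b₂ a₃ b₃ : V) : ℝ≥0∞ :=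
  X₁.e a₁ * X₁.e a₂ * X₁.e a₃ +
    X₁.e b₁ * (X₁.e a₂ + s * X₂.e b₂) * (X₁.e a₃ + s * X₂.e b₃) +
    X₁.e b₂ * (X₁.e a₁ + s * X₂.e b₁) * (X₁.e a₃ + s * X₂.e b₃) +
    X₁.e b₃ * (X₁.e a₁ + s * X₂.e b₁) * (X₁.e a₂ + s * X₂.e b₂)

section Trilinear

variable {W : Type*} [AddCommGroup W] [Module ℝ W] {X₁ X₂ : ENormC V} {Y₁ Y₂ : ENormC W}

theorem Kfun_trilinear_le {T : V →ₗ[ℝ] V →ₗ[ℝ] V →ₗ[ℝ] W} {C₀ s t : ℝ≥0∞} (hst : s * s = t)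
    (hsymm : ∀ a b c : V, T a b c = T b a c ∧ T a b c = T a c b)
    (h₁ : ∀ a₁ a₂ a₃ : V, Y₁.e (T a₁ a₂ a₃) ≤ C₀ * X₁.e a₁ * X₁.e a₂ * X₁.e a₃)
    (h₂ : ∀ b₁ b₂ b₃ : V, Y₂.e (T b₁ b₂ b₃) ≤
      C₀ * (X₁.e b₁ * X₂.e b₂ * X₂.e b₃ + X₂.e b₁ * X₁.e b₂ * X₂.e b₃ +
        X₂.e b₁ * X₂.e b₂ * X₁.e b₃))
    (h₃ : ∀ a b₂ b₃ : V, Kfun Y₁ Y₂ t (T a b₂ b₃) ≤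
      s * (C₀ * X₁.e a * (X₂.e b₂ * X₁.e b₃ + X₁.e b₂ * X₂.e b₃)))
    (y₁ y₂ y₃ : V) :
    ∀ a₁ b₁ a₂ b₂ a₃ b₃ : V, a₁ + b₁ = y₁ → a₂ + b₂ = y₂ → a₃ + b₃ = y₃ →
      Kfun Y₁ Y₂ t (T y₁ y₂ y₃) ≤ C₀ * splitBound X₁ X₂ s a₁ b₁ a₂ b₂ a₃ b₃ := by
  rintro a₁ b₁ a₂ b₂ a₃ b₃ rfl rfl rfl
  subst hst
  have hY₁ (u v w : V) : Kfun Y₁ Y₂ (s * s) (T u v w) ≤ C₀ * X₁.e u * X₁.e v * X₁.e w :=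
    (Kfun_le_left _ _ _ _).trans (h₁ u v w)
  have h₃₂ : Kfun Y₁ Y₂ (s * s) (T b₁ a₂ b₃) ≤
      s * (C₀ * X₁.e a₂ * (X₂.e b₁ * X₁.e b₃ + X₁.e b₁ * X₂.e b₃)) := by
    rw [(hsymm b₁ a₂ b₃).1]; exact h₃ _ _ _
  have h₃₃ : Kfun Y₁ Y₂ (s * s) (T b₁ b₂ a₃) ≤
      s * (C₀ * X₁.e a₃ * (X₂.e b₁ * X₁.e b₂ + X₁.e b₁ * X₂.e b₂)) := by
    rw [(hsymm b₁ b₂ a₃).2, (hsymm b₁ a₃ b₂).1]; exact h₃ _ _ _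
  have hY₂ := (Kfun_le_right Y₁ Y₂ (s * s) (T b₁ b₂ b₃)).trans (mul_le_mul_right (h₂ b₁ b₂ b₃) _)
  simp only [map_add, LinearMap.add_apply]
  refine (Kfun_add_le_of_le _ _
    (Kfun_add_le_of_le _ _ (Kfun_add_le_of_le _ _ (hY₁ _ _ _) (hY₁ _ _ _))
      (Kfun_add_le_of_le _ _ (hY₁ _ _ _) h₃₃))
    (Kfun_add_le_of_le _ _ (Kfun_add_le_of_le _ _ (hY₁ _ _ _) h₃₂)
      (Kfun_add_le_of_le _ _ (h₃ _ _ _) hY₂))).trans_eq ?_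
  unfold splitBound
  ring

theorem Kfun_trilinear_top_le {T : V →ₗ[ℝ] V →ₗ[ℝ] V →ₗ[ℝ] W} {C₀ : ℝ≥0∞}
    (hX : ∀ v, X₂.e v = 0 → X₁.e v = 0)
    (h₁ : ∀ a₁ a₂ a₃ : V, Y₁.e (T a₁ a₂ a₃) ≤ C₀ * X₁.e a₁ * X₁.e a₂ * X₁.e a₃) (x₁ x₂ x₃ : V) :
    Kfun Y₁ Y₂ ⊤ (T x₁ x₂ x₃) ≤
      3 * C₀ * (X₁.e x₁ * Kfun X₁ X₂ ⊤ x₂ * Kfun X₁ X₂ ⊤ x₃ +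
        Kfun X₁ X₂ ⊤ x₁ * (X₁.e x₂ * Kfun X₁ X₂ ⊤ x₃ + X₁.e x₃ * Kfun X₁ X₂ ⊤ x₂)) := by
  simp only [Kfun_top X₁ X₂ hX]
  calc Kfun Y₁ Y₂ ⊤ (T x₁ x₂ x₃) ≤ C₀ * X₁.e x₁ * X₁.e x₂ * X₁.e x₃ :=
        (Kfun_le_left _ _ _ _).trans (h₁ x₁ x₂ x₃)
    _ = 1 * (C₀ * (X₁.e x₁ * X₁.e x₂ * X₁.e x₃)) := by ring
    _ ≤ 3 * (C₀ * (X₁.e x₁ * X₁.e x₂ * X₁.e x₃ +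
          X₁.e x₁ * (X₁.e x₂ * X₁.e x₃ + X₁.e x₃ * X₁.e x₂))) := by
        gcongr
        · norm_num
        · exact le_self_add
    _ = _ := by ring

theorem splitBound_le_mul_of_embedding {c s : ℝ≥0∞} (hs₀ : s ≠ 0) (hs : s ≠ ⊤)
    (hc : ∀ v, X₁.e v ≤ c * X₂.e v) (a₁ b₁ a₂ b₂ a₃ b₃ : V) :
    splitBound X₁ X₂ s a₁ b₁ a₂ b₂ a₃ b₃ ≤ (1 + 3 * (c * s⁻¹)) *
      ((X₁.e a₁ + s * X₂.e b₁) * (X₁.e a₂ + s * X₂.e b₂) * (X₁.e a₃ + s * X₂.e b₃)) := by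
  have hb (a b : V) : X₁.e b ≤ c * s⁻¹ * (X₁.e a + s * X₂.e b) :=
    calc X₁.e b ≤ c * X₂.e b := hc b
      _ = c * s⁻¹ * (s * X₂.e b) := by rw [mul_assoc, ENNReal.inv_mul_cancel_left hs₀ hs]
      _ ≤ c * s⁻¹ * (X₁.e a + s * X₂.e b) := by gcongr; exact le_add_self
  unfold splitBound
  set J₁ := X₁.e a₁ + s * X₂.e b₁
  set J₂ := X₁.e a₂ + s * X₂.e b₂
  set J₃ := X₁.e a₃ + s * X₂.e b₃
  calc _ ≤ J₁ * J₂ * J₃ + c * s⁻¹ * J₁ * J₂ * J₃ + c * s⁻¹ * J₂ * J₁ * J₃ +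
        c * s⁻¹ * J₃ * J₁ * J₂ := by
        gcongr
        all_goals first | exact le_self_add | exact hb _ _
    _ = _ := by ring

theorem splitBound_le_pow_mul {s r k₁ k₂ k₃ : ℝ≥0∞} {a₁ b₁ a₂ b₂ a₃ b₃ : V} (hr : 1 ≤ r)
    (hk₁ : k₁ ≤ X₁.e (a₁ + b₁)) (hk₂ : k₂ ≤ X₁.e (a₂ + b₂))
    (hJ₁ : X₁.e a₁ + s * X₂.e b₁ ≤ r * k₁) (hJ₂ : X₁.e a₂ + s * X₂.e b₂ ≤ r * k₂)
    (hJ₃ : X₁.e a₃ + s * X₂.e b₃ ≤ r * k₃) :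
    splitBound X₁ X₂ s a₁ b₁ a₂ b₂ a₃ b₃ ≤ r ^ 3 * (3 * (X₁.e (a₁ + b₁) * k₂ * k₃ +
      k₁ * (X₁.e (a₂ + b₂) * k₃ + X₁.e (a₃ + b₃) * k₂))) := by
  have hb (a b : V) : X₁.e b ≤ X₁.e (a + b) + (X₁.e a + s * X₂.e b) :=
    (X₁.e_le_e_add_add a b).trans (add_le_add le_rfl le_self_add)
  unfold splitBound
  set N₁ := X₁.e (a₁ + b₁)
  set N₂ := X₁.e (a₂ + b₂)
  set N₃ := X₁.e (a₃ + b₃)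
  set J₁ := X₁.e a₁ + s * X₂.e b₁
  set J₂ := X₁.e a₂ + s * X₂.e b₂
  set J₃ := X₁.e a₃ + s * X₂.e b₃
  have hN (N : ℝ≥0∞) : N ≤ r * N := le_mul_of_one_le_left' hr
  calc _ ≤ J₁ * J₂ * J₃ + (N₁ + J₁) * J₂ * J₃ + (N₂ + J₂) * J₁ * J₃ + (N₃ + J₃) * J₁ * J₂ := by
        gcongr
        all_goals first | exact le_self_add | exact hb _ _
    _ ≤ r * k₁ * (r * k₂) * (r * k₃) + (r * N₁ + r * k₁) * (r * k₂) * (r * k₃) +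
        (r * N₂ + r * k₂) * (r * k₁) * (r * k₃) + (r * N₃ + r * k₃) * (r * k₁) * (r * k₂) := by
        gcongr <;> apply hN
    _ = r ^ 3 * (k₁ * k₂ * k₃ + (N₁ + k₁) * k₂ * k₃ + (N₂ + k₂) * k₁ * k₃ +
        (N₃ + k₃) * k₁ * k₂) := by ring
    _ ≤ r ^ 3 * (3 * (N₁ * k₂ * k₃ + k₁ * (N₂ * k₃ + N₃ * k₂))) := by
        gcongr
        exact ENNReal.cubic_le_three_mul hk₁ hk₂

theorem eq_zero_of_le_splitBound {L C c s : ℝ≥0∞} {y₁ y₂ y₃ : V} (hC : C ≠ ⊤) (hc : c ≠ ⊤)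
    (hs₀ : s ≠ 0) (hs : s ≠ ⊤) (hemb : ∀ v, X₁.e v ≤ c * X₂.e v)
    (hL : ∀ a₁ b₁ a₂ b₂ a₃ b₃ : V, a₁ + b₁ = y₁ → a₂ + b₂ = y₂ → a₃ + b₃ = y₃ →
      L ≤ C * splitBound X₁ X₂ s a₁ b₁ a₂ b₂ a₃ b₃)
    (h₁ : Kfun X₁ X₂ s y₁ = 0) (h₂ : Kfun X₁ X₂ s y₂ ≠ ⊤) (h₃ : Kfun X₁ X₂ s y₃ ≠ ⊤) :
    L = 0 := by
  obtain ⟨a₂, b₂, hab₂, hJ₂⟩ := exists_add_eq_lt_of_Kfun_lt X₁ X₂ h₂.lt_top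
  obtain ⟨a₃, b₃, hab₃, hJ₃⟩ := exists_add_eq_lt_of_Kfun_lt X₁ X₂ h₃.lt_top
  set M := C * (1 + 3 * (c * s⁻¹)) * ((X₁.e a₂ + s * X₂.e b₂) * (X₁.e a₃ + s * X₂.e b₃))
  have hM : M ≠ ⊤ := ENNReal.mul_ne_top (ENNReal.mul_ne_top hC (by finiteness))
    (ENNReal.mul_ne_top hJ₂.ne hJ₃.ne)
  have hLM : L ≤ M * Kfun X₁ X₂ s y₁ := by
    rw [Kfun, ENNReal.mul_iInf fun h => absurd h hM]
    refine le_iInf fun ⟨(a₁, b₁), hab₁⟩ => (hL a₁ b₁ a₂ b₂ a₃ b₃ hab₁ hab₂ hab₃).trans ?_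
    calc C * splitBound X₁ X₂ s a₁ b₁ a₂ b₂ a₃ b₃
        ≤ C * ((1 + 3 * (c * s⁻¹)) * ((X₁.e a₁ + s * X₂.e b₁) * (X₁.e a₂ + s * X₂.e b₂) *
          (X₁.e a₃ + s * X₂.e b₃))) := by
          gcongr
          exact splitBound_le_mul_of_embedding hs₀ hs hemb _ _ _ _ _ _
      _ = M * (X₁.e a₁ + s * X₂.e b₁) := by ring
  simpa [h₁] using hLM

theorem le_of_le_splitBound {L C s : ℝ≥0∞} {y₁ y₂ y₃ : V}
    (hL : ∀ a₁ b₁ a₂ b₂ a₃ b₃ : V, a₁ + b₁ = y₁ → a₂ + b₂ = y₂ → a₃ + b₃ = y₃ →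
      L ≤ C * splitBound X₁ X₂ s a₁ b₁ a₂ b₂ a₃ b₃)
    (h₁ : Kfun X₁ X₂ s y₁ ≠ 0) (h₂ : Kfun X₁ X₂ s y₂ ≠ 0) (h₃ : Kfun X₁ X₂ s y₃ ≠ 0)
    (h₁' : Kfun X₁ X₂ s y₁ ≠ ⊤) (h₂' : Kfun X₁ X₂ s y₂ ≠ ⊤) (h₃' : Kfun X₁ X₂ s y₃ ≠ ⊤) :
    L ≤ 3 * C * (X₁.e y₁ * Kfun X₁ X₂ s y₂ * Kfun X₁ X₂ s y₃ +
      Kfun X₁ X₂ s y₁ * (X₁.e y₂ * Kfun X₁ X₂ s y₃ + X₁.e y₃ * Kfun X₁ X₂ s y₂)) := by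
  refine ENNReal.le_of_forall_one_lt_le_pow_mul 3 fun r hr _ => ?_
  obtain ⟨a₁, b₁, rfl, hJ₁⟩ := exists_add_eq_le_mul_Kfun X₁ X₂ hr h₁ h₁'
  obtain ⟨a₂, b₂, rfl, hJ₂⟩ := exists_add_eq_le_mul_Kfun X₁ X₂ hr h₂ h₂'
  obtain ⟨a₃, b₃, rfl, hJ₃⟩ := exists_add_eq_le_mul_Kfun X₁ X₂ hr h₃ h₃'
  calc L ≤ C * splitBound X₁ X₂ s a₁ b₁ a₂ b₂ a₃ b₃ := hL _ _ _ _ _ _ rfl rfl rfl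
    _ ≤ C * (r ^ 3 * (3 * (X₁.e (a₁ + b₁) * Kfun X₁ X₂ s (a₂ + b₂) * Kfun X₁ X₂ s (a₃ + b₃) +
        Kfun X₁ X₂ s (a₁ + b₁) * (X₁.e (a₂ + b₂) * Kfun X₁ X₂ s (a₃ + b₃) +
          X₁.e (a₃ + b₃) * Kfun X₁ X₂ s (a₂ + b₂))))) := by
        gcongr
        exact splitBound_le_pow_mul hr.le (Kfun_le_left _ _ _ _) (Kfun_le_left _ _ _ _) hJ₁ hJ₂ hJ₃
    _ = _ := by ring

end Trilinear

theorem trilinear_K_functional_bound_general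
    {W : Type*} [AddCommGroup W] [Module ℝ W]
    (X₁ X₂ : ENormC V) (Y₁ Y₂ : ENormC W)
    (hembed : ∃ c : ℝ≥0∞, c ≠ ⊤ ∧ ∀ v, X₁.e v ≤ c * X₂.e v)
    (T : V →ₗ[ℝ] V →ₗ[ℝ] V →ₗ[ℝ] W) (C₀ : ℝ≥0∞) (hC₀top : C₀ ≠ ⊤)
    (hsymm : ∀ a b c : V, T a b c = T b a c ∧ T a b c = T a c b)
    (h₁ : ∀ a₁ a₂ a₃ : V, Y₁.e (T a₁ a₂ a₃) ≤ C₀ * X₁.e a₁ * X₁.e a₂ * X₁.e a₃)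
    (h₂ : ∀ b₁ b₂ b₃ : V, Y₂.e (T b₁ b₂ b₃) ≤
      C₀ * (X₁.e b₁ * X₂.e b₂ * X₂.e b₃ + X₂.e b₁ * X₁.e b₂ * X₂.e b₃ +
        X₂.e b₁ * X₂.e b₂ * X₁.e b₃))
    (h₃ : ∀ a b₂ b₃ : V, interpN Y₁ Y₂ (1 / 2) ⊤ (T a b₂ b₃) ≤
      C₀ * X₁.e a * (X₂.e b₂ * X₁.e b₃ + X₁.e b₂ * X₂.e b₃))
    (θ : ℝ)
    (x₁ x₂ x₃ : V)
    (hx₁ : interpN X₁ X₂ θ ⊤ x₁ ≠ ⊤) (hx₂ : interpN X₁ X₂ θ ⊤ x₂ ≠ ⊤)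
    (hx₃ : interpN X₁ X₂ θ ⊤ x₃ ≠ ⊤) :
    ∀ t : ℝ≥0∞,
      Kfun Y₁ Y₂ t (T x₁ x₂ x₃) ≤
        3 * C₀ * (X₁.e x₁ * Kfun X₁ X₂ (t ^ (1 / 2 : ℝ)) x₂ * Kfun X₁ X₂ (t ^ (1 / 2 : ℝ)) x₃ +
          Kfun X₁ X₂ (t ^ (1 / 2 : ℝ)) x₁ *
            (X₁.e x₂ * Kfun X₁ X₂ (t ^ (1 / 2 : ℝ)) x₃ +
              X₁.e x₃ * Kfun X₁ X₂ (t ^ (1 / 2 : ℝ)) x₂)) := by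
  obtain ⟨c, hc, hemb⟩ := hembed
  intro t
  rcases eq_or_ne t 0 with rfl | ht₀
  · exact (Kfun_le_right _ _ _ _).trans (by rw [zero_mul]; exact zero_le)
  rcases eq_or_ne t ⊤ with rfl | ht
  · rw [ENNReal.top_rpow_of_pos (by norm_num)]
    exact Kfun_trilinear_top_le (fun v hv => by simpa [hv] using hemb v) h₁ x₁ x₂ x₃
  set s := t ^ (1 / 2 : ℝ)
  have hs₀ : s ≠ 0 := by simp [s, ht₀, ht]
  have hs : s ≠ ⊤ := ENNReal.rpow_ne_top_of_ne_zero ht₀ ht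
  have hss : s * s = t := by rw [← ENNReal.rpow_add _ _ ht₀ ht]; norm_num
  have hK (y : V) (hy : interpN X₁ X₂ θ ⊤ y ≠ ⊤) : Kfun X₁ X₂ s y ≠ ⊤ :=
    Kfun_ne_top_of_interpN_ne_top X₁ X₂ hy hs₀ hs
  have hL := Kfun_trilinear_le hss hsymm h₁ h₂ fun a b₂ b₃ =>
    (Kfun_le_rpow_mul_interpN Y₁ Y₂ ht₀ ht _ _).trans (mul_le_mul_right (h₃ a b₂ b₃) s)
  have hzero (y₁ y₂ y₃ : V) (hy₂ : interpN X₁ X₂ θ ⊤ y₂ ≠ ⊤) (hy₃ : interpN X₁ X₂ θ ⊤ y₃ ≠ ⊤)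
      (hy₁ : Kfun X₁ X₂ s y₁ = 0) : Kfun Y₁ Y₂ t (T y₁ y₂ y₃) = 0 :=
    eq_zero_of_le_splitBound hC₀top hc hs₀ hs hemb (hL y₁ y₂ y₃) hy₁ (hK y₂ hy₂) (hK y₃ hy₃)
  by_cases hK₁ : Kfun X₁ X₂ s x₁ = 0
  · simp [hzero x₁ x₂ x₃ hx₂ hx₃ hK₁]
  by_cases hK₂ : Kfun X₁ X₂ s x₂ = 0
  · simp [(hsymm x₁ x₂ x₃).1, hzero x₂ x₁ x₃ hx₁ hx₃ hK₂]
  by_cases hK₃ : Kfun X₁ X₂ s x₃ = 0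
  · simp [(hsymm x₁ x₂ x₃).2, (hsymm x₁ x₃ x₂).1, hzero x₃ x₁ x₂ hx₁ hx₂ hK₃]
  exact le_of_le_splitBound (hL x₁ x₂ x₃) hK₁ hK₂ hK₃ (hK x₁ hx₁) (hK x₂ hx₂) (hK x₃ hx₃)

theorem trilinear_K_functional_bound
    {W : Type*} [AddCommGroup W] [Module ℝ W]
    (X₁ X₂ : ENormC V) (Y₁ Y₂ : ENormC W)
    (hembed : ∃ c : ℝ≥0∞, c ≠ ⊤ ∧ ∀ v, X₁.e v ≤ c * X₂.e v)
    (T : V →ₗ[ℝ] V →ₗ[ℝ] V →ₗ[ℝ] W) (C₀ : ℝ≥0∞) (hC₀ : 0 < C₀) (hC₀top : C₀ ≠ ⊤)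
    (hsymm : ∀ a b c : V, T a b c = T b a c ∧ T a b c = T a c b)
    (h₁ : ∀ a₁ a₂ a₃ : V, Y₁.e (T a₁ a₂ a₃) ≤ C₀ * X₁.e a₁ * X₁.e a₂ * X₁.e a₃)
    (h₂ : ∀ b₁ b₂ b₃ : V, Y₂.e (T b₁ b₂ b₃) ≤
      C₀ * (X₁.e b₁ * X₂.e b₂ * X₂.e b₃ + X₂.e b₁ * X₁.e b₂ * X₂.e b₃ +
        X₂.e b₁ * X₂.e b₂ * X₁.e b₃))
    (h₃ : ∀ a b₂ b₃ : V, interpN Y₁ Y₂ (1 / 2) ⊤ (T a b₂ b₃) ≤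
      C₀ * X₁.e a * (X₂.e b₂ * X₁.e b₃ + X₁.e b₂ * X₂.e b₃))
    (θ : ℝ) (hθ : 0 < θ) (hθ1 : θ < 1)
    (x₁ x₂ x₃ : V)
    (hx₁ : interpN X₁ X₂ θ ⊤ x₁ ≠ ⊤) (hx₂ : interpN X₁ X₂ θ ⊤ x₂ ≠ ⊤)
    (hx₃ : interpN X₁ X₂ θ ⊤ x₃ ≠ ⊤) :
    ∀ t : ℝ≥0∞,
      Kfun Y₁ Y₂ t (T x₁ x₂ x₃) ≤
        3 * C₀ * (X₁.e x₁ * Kfun X₁ X₂ (t ^ (1 / 2 : ℝ)) x₂ * Kfun X₁ X₂ (t ^ (1 / 2 : ℝ)) x₃ +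
          Kfun X₁ X₂ (t ^ (1 / 2 : ℝ)) x₁ *
            (X₁.e x₂ * Kfun X₁ X₂ (t ^ (1 / 2 : ℝ)) x₃ +
              X₁.e x₃ * Kfun X₁ X₂ (t ^ (1 / 2 : ℝ)) x₂)) :=
  trilinear_K_functional_bound_general X₁ X₂ Y₁ Y₂ hembed T C₀ hC₀top hsymm h₁ h₂ h₃ θ x₁ x₂ x₃ hx₁
    hx₂ hx₃
end
end

section
/- Let u, w, z : 𝕋³ → ℝ³ be smooth divergence-free vector fields. Then ∂ᵢ∂ⱼ∂ₖ(uⁱwʲzᵏ) = ∂ⱼ(∂ₖuⁱ ∂ᵢwʲ zᵏ + ∂ₖuⁱ wʲ ∂ᵢzᵏ) + ∂ᵢ(∂ⱼuⁱ ∂ₖwʲ zᵏ + uⁱ ∂ₖwʲ ∂ⱼzᵏ), where repeated indices are summed over 1,2,3. -/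
open MeasureTheory ENNReal
open scoped Classical
noncomputable section
abbrev Ed (d : ℕ) := EuclideanSpace ℝ (Fin d)

/-- A fundamental domain for the torus. -/
def box (d : ℕ) : Set (Ed d) := {x | ∀ i, x i ∈ Set.Icc (0 : ℝ) 1}

/-- Lebesgue measure on the fundamental domain, modelling integration over the torus. -/
noncomputable def μT (d : ℕ) : Measure (Ed d) := volume.restrict (box d)

/-- Periodicity: a function on Euclidean space induced by a function on the torus. -/
def PeriodicF {F : Type*} (d : ℕ) (f : Ed d → F) : Prop :=
  ∀ x (i : Fin d), f (x + EuclideanSpace.single i 1) = f x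

/-- Sobolev norm of order n: sum of the L^r norms of the derivatives up to order n. -/
noncomputable def sobolevNorm {F : Type*} [NormedAddCommGroup F] [NormedSpace ℝ F]
    (d : ℕ) (n : ℕ) (r : ℝ≥0∞) (μ : Measure (Ed d)) (f : Ed d → F) : ℝ≥0∞ :=
  ∑ k ∈ Finset.range (n + 1), eLpNorm (fun x => iteratedFDeriv ℝ k f x) r μ

/-- Besov seminorm of a non-integer order m + ε, via first differences of the
m-th derivatives, with integrability s in the translation variable. -/
noncomputable def diff1Semi {F : Type*} [NormedAddCommGroup F] [NormedSpace ℝ F]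
    (d : ℕ) (m : ℕ) (ε : ℝ) (r s : ℝ≥0∞) (μ : Measure (Ed d)) (f : Ed d → F) : ℝ≥0∞ :=
  if s = ∞ then
    ⨆ h : {h : Ed d // h ≠ 0},
      ENNReal.ofReal (‖h.1‖ ^ (-ε)) *
        eLpNorm (fun x => iteratedFDeriv ℝ m f (x + h.1) - iteratedFDeriv ℝ m f x) r μ
  else
    (∫⁻ h : Ed d,
        (ENNReal.ofReal (‖h‖ ^ (-ε)) *
            eLpNorm (fun x => iteratedFDeriv ℝ m f (x + h) - iteratedFDeriv ℝ m f x) r μ) ^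
            s.toReal *
          ENNReal.ofReal (‖h‖ ^ (-(d : ℝ)))) ^ s.toReal⁻¹

/-- Besov seminorm of an integer order m, via second differences of the m-th derivatives. -/
noncomputable def diff2Semi {F : Type*} [NormedAddCommGroup F] [NormedSpace ℝ F]
    (d : ℕ) (m : ℕ) (r s : ℝ≥0∞) (μ : Measure (Ed d)) (f : Ed d → F) : ℝ≥0∞ :=
  if s = ∞ then
    ⨆ h : {h : Ed d // h ≠ 0},
      ENNReal.ofReal (‖h.1‖ ^ (-1 : ℝ)) *
        eLpNorm (fun x => iteratedFDeriv ℝ m f (x + h.1 + h.1) -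
          (2 : ℝ) • iteratedFDeriv ℝ m f (x + h.1) + iteratedFDeriv ℝ m f x) r μ
  else
    (∫⁻ h : Ed d,
        (ENNReal.ofReal (‖h‖ ^ (-1 : ℝ)) *
            eLpNorm (fun x => iteratedFDeriv ℝ m f (x + h + h) -
              (2 : ℝ) • iteratedFDeriv ℝ m f (x + h) + iteratedFDeriv ℝ m f x) r μ) ^
            s.toReal *
          ENNReal.ofReal (‖h‖ ^ (-(d : ℝ)))) ^ s.toReal⁻¹

/-- Besov norm of order α > 0: Sobolev norm of integer order plus the appropriate
difference seminorm (second differences when α is an integer, first differences of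
the derivatives of order ⌊α⌋ otherwise). -/
noncomputable def besovG {F : Type*} [NormedAddCommGroup F] [NormedSpace ℝ F]
    (d : ℕ) (α : ℝ) (r s : ℝ≥0∞) (μ : Measure (Ed d)) (f : Ed d → F) : ℝ≥0∞ :=
  if hα : ∃ n : ℕ, α = (n : ℝ) then
    sobolevNorm d hα.choose r μ f + diff2Semi d hα.choose r s μ f
  else
    sobolevNorm d ⌊α⌋₊ r μ f + diff1Semi d ⌊α⌋₊ (α - ⌊α⌋₊) r s μ f


abbrev E3 := Ed 3

/-- Partial derivative in direction i of a scalar function. -/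
noncomputable def pd (i : Fin 3) (g : E3 → ℝ) (x : E3) : ℝ :=
  fderiv ℝ g x (EuclideanSpace.single i 1)

/-- Smooth periodic test functions on the torus. -/
def sTest (χ : E3 → ℝ) : Prop := ContDiff ℝ (⊤ : ℕ∞) χ ∧ PeriodicF 3 χ

/-- The Laplacian of a scalar function. -/
noncomputable def lapl (χ : E3 → ℝ) (x : E3) : ℝ := ∑ i, pd i (pd i χ) x

/-- Weak (distributional) divergence-free condition on the torus. -/
def WeakDivFree (v : E3 → E3) : Prop :=
  ∀ χ : E3 → ℝ, sTest χ → (∫ x in box 3, ∑ i, v x i * pd i χ x) = 0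


section Lemmas
variable {f g : E3 → ℝ} {a b : Fin 3}

@[fun_prop]
theorem pd_smooth (hf : ContDiff ℝ (⊤ : ℕ∞) f) (a : Fin 3) : ContDiff ℝ (⊤ : ℕ∞) (pd a f) := by
  unfold pd
  exact (hf.fderiv_right (by simp)).clm_apply contDiff_const

theorem pdF_mul (hf : ContDiff ℝ (⊤ : ℕ∞) f) (hg : ContDiff ℝ (⊤ : ℕ∞) g) :
    pd a (fun y => f y * g y) = fun x => pd a f x * g x + f x * pd a g x := by
  funext x
  unfold pd
  rw [fderiv_fun_mul (hf.differentiable (by simp) x)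
    (hg.differentiable (by simp) x)]
  simp only [ContinuousLinearMap.add_apply, ContinuousLinearMap.smul_apply, smul_eq_mul]
  ring

theorem pdF_add (hf : ContDiff ℝ (⊤ : ℕ∞) f) (hg : ContDiff ℝ (⊤ : ℕ∞) g) :
    pd a (fun y => f y + g y) = fun x => pd a f x + pd a g x := by
  funext x
  unfold pd
  rw [fderiv_fun_add (hf.differentiable (by simp) x)
    (hg.differentiable (by simp) x)]
  simp

theorem pd_comm (hf : ContDiff ℝ (⊤ : ℕ∞) f) (a b : Fin 3) (x : E3) :
    pd a (pd b f) x = pd b (pd a f) x := by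
  have hsymm := (hf.contDiffAt (x := x)).isSymmSndFDerivAt ((by rw [minSmoothness_of_isRCLikeNormedField]; exact WithTop.coe_le_coe.2 (le_top : (2 : ℕ∞) ≤ ⊤)))
  have key : ∀ c d : Fin 3, pd c (pd d f) x =
      fderiv ℝ (fderiv ℝ f) x (EuclideanSpace.single c 1) (EuclideanSpace.single d 1) := by
    intro c d
    unfold pd
    rw [fderiv_clm_apply ((hf.fderiv_right (m := (⊤ : ℕ∞)) (by simp)).differentiable (by simp) x)
      (differentiableAt_const _)]
    simp
  rw [key, key, hsymm]

theorem pdF_sum {ι : Type*} (s : Finset ι) (F : ι → E3 → ℝ) (hF : ∀ i, ContDiff ℝ (⊤ : ℕ∞) (F i)) :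
    pd a (fun y => ∑ i ∈ s, F i y) = fun x => ∑ i ∈ s, pd a (F i) x := by
  funext x
  unfold pd
  rw [fderiv_fun_sum (fun i _ => ((hF i).differentiable (by simp) x))]
  simp

end Lemmas

theorem coord_smooth {u : E3 → E3} (hu : ContDiff ℝ (⊤ : ℕ∞) u) (i : Fin 3) :
    ContDiff ℝ (⊤ : ℕ∞) (fun y => u y i) :=
  (EuclideanSpace.proj (𝕜 := ℝ) i).contDiff.comp hu


section Lemmas2
variable {f : E3 → ℝ} {a b : Fin 3}

theorem pdF_comm (hf : ContDiff ℝ (⊤ : ℕ∞) f) (a b : Fin 3) : pd a (pd b f) = pd b (pd a f) :=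
  funext fun x => pd_comm hf a b x

theorem pdF_const (a : Fin 3) (c : ℝ) : pd a (fun _ => c) = fun _ => 0 := by
  funext x
  unfold pd
  simp

theorem div_deriv1 (v : E3 → E3) (hv : ContDiff ℝ (⊤ : ℕ∞) v)
    (hdv : ∀ x, (∑ i, pd i (fun y => v y i) x) = 0) (a : Fin 3) (x : E3) :
    ∑ i, pd a (pd i (fun y => v y i)) x = 0 := by
  have h2 := pdF_sum (a := a) Finset.univ (fun i => pd i (fun y => v y i))
    (fun i => pd_smooth (coord_smooth hv i) i)
  have h1 : (fun y => ∑ i, pd i (fun y' => v y' i) y) = fun _ => (0 : ℝ) := funext hdv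
  calc ∑ i, pd a (pd i (fun y => v y i)) x
      = pd a (fun y => ∑ i, pd i (fun y' => v y' i) y) x := by rw [h2]
    _ = pd a (fun _ => (0:ℝ)) x := by rw [h1]
    _ = 0 := by rw [pdF_const]

theorem div_deriv2 (v : E3 → E3) (hv : ContDiff ℝ (⊤ : ℕ∞) v)
    (hdv : ∀ x, (∑ i, pd i (fun y => v y i) x) = 0) (a b : Fin 3) (x : E3) :
    ∑ i, pd a (pd b (pd i (fun y => v y i))) x = 0 := by
  have h2 := pdF_sum (a := a) Finset.univ (fun i => pd b (pd i (fun y => v y i)))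
    (fun i => pd_smooth (pd_smooth (coord_smooth hv i) i) b)
  have h1 : (fun y => ∑ i, pd b (pd i (fun y' => v y' i)) y) = fun _ => (0 : ℝ) :=
    funext (div_deriv1 v hv hdv b)
  calc ∑ i, pd a (pd b (pd i (fun y => v y i))) x
      = pd a (fun y => ∑ i, pd b (pd i (fun y' => v y' i)) y) x := by rw [h2]
    _ = pd a (fun _ => (0:ℝ)) x := by rw [h1]
    _ = 0 := by rw [pdF_const]

theorem kill_i (G : Fin 3 → Fin 3 → Fin 3 → ℝ) (C : Fin 3 → Fin 3 → ℝ)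
    (h : ∀ j k, ∑ i, G i j k = 0) :
    (∑ i, ∑ j, ∑ k, G i j k * C j k) = 0 := by
  have key : ∀ j k : Fin 3, (∑ i, G i j k * C j k) = 0 := fun j k => by
    rw [← Finset.sum_mul, h j k, zero_mul]
  calc (∑ i, ∑ j, ∑ k, G i j k * C j k)
      = ∑ j, ∑ i, ∑ k, G i j k * C j k := Finset.sum_comm
    _ = ∑ j, ∑ k, ∑ i, G i j k * C j k :=
        Finset.sum_congr rfl fun j _ => Finset.sum_comm
    _ = 0 := by simp [key]

theorem kill_j (G : Fin 3 → Fin 3 → Fin 3 → ℝ) (C : Fin 3 → Fin 3 → ℝ)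
    (h : ∀ i k, ∑ j, G i j k = 0) :
    (∑ i, ∑ j, ∑ k, G i j k * C i k) = 0 := by
  have key : ∀ i k : Fin 3, (∑ j, G i j k * C i k) = 0 := fun i k => by
    rw [← Finset.sum_mul, h i k, zero_mul]
  calc (∑ i, ∑ j, ∑ k, G i j k * C i k)
      = ∑ i, ∑ k, ∑ j, G i j k * C i k :=
        Finset.sum_congr rfl fun i _ => Finset.sum_comm
    _ = 0 := by simp [key]

theorem kill_k (G : Fin 3 → Fin 3 → Fin 3 → ℝ) (C : Fin 3 → Fin 3 → ℝ)
    (h : ∀ i j, ∑ k, G i j k = 0) :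
    (∑ i, ∑ j, ∑ k, G i j k * C i j) = 0 := by
  refine Finset.sum_eq_zero fun i _ => Finset.sum_eq_zero fun j _ => ?_
  rw [← Finset.sum_mul, h i j, zero_mul]

end Lemmas2

/-- Algebraic identity for the triple divergence of a triple tensor product of
divergence-free fields. -/
theorem triple_divergence_identity (u w z : E3 → E3)
    (hu : ContDiff ℝ (⊤ : ℕ∞) u) (hw : ContDiff ℝ (⊤ : ℕ∞) w) (hz : ContDiff ℝ (⊤ : ℕ∞) z)
    (hdu : ∀ x, (∑ i, pd i (fun y => u y i) x) = 0)
    (hdw : ∀ x, (∑ j, pd j (fun y => w y j) x) = 0)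
    (hdz : ∀ x, (∑ k, pd k (fun y => z y k) x) = 0) :
    ∀ x : E3,
      (∑ i, ∑ j, ∑ k,
        pd i (pd j (pd k (fun y => u y i * w y j * z y k))) x) =
      (∑ i, ∑ j, ∑ k,
        (pd j (fun y => pd k (fun y' => u y' i) y * pd i (fun y' => w y' j) y * z y k +
            pd k (fun y' => u y' i) y * w y j * pd i (fun y' => z y' k) y) x +
          pd i (fun y => pd j (fun y' => u y' i) y * pd k (fun y' => w y' j) y * z y k +
            u y i * pd k (fun y' => w y' j) y * pd j (fun y' => z y' k) y) x)) := by
  have hU : ∀ i, ContDiff ℝ (⊤ : ℕ∞) (fun y => u y i) := fun i => coord_smooth hu i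
  have hW : ∀ i, ContDiff ℝ (⊤ : ℕ∞) (fun y => w y i) := fun i => coord_smooth hw i
  have hZ : ∀ i, ContDiff ℝ (⊤ : ℕ∞) (fun y => z y i) := fun i => coord_smooth hz i
  intro x
  have hL : (∑ i, ∑ j, ∑ k,
        pd i (pd j (pd k (fun y => u y i * w y j * z y k))) x) =
      (∑ i : Fin 3, ∑ j : Fin 3, ∑ k : Fin 3,
        (pd j (pd k (fun y => u y i)) x * pd i (fun y => w y j) x * z x k +
          pd j (pd k (fun y => u y i)) x * w x j * pd i (fun y => z y k) x +
          pd j (fun y => u y i) x * pd i (pd k (fun y => w y j)) x * z x k +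
          pd j (fun y => u y i) x * pd k (fun y => w y j) x * pd i (fun y => z y k) x +
          pd k (fun y => u y i) x * pd i (fun y => w y j) x * pd j (fun y => z y k) x +
          pd k (fun y => u y i) x * w x j * pd i (pd j (fun y => z y k)) x +
          u x i * pd i (pd k (fun y => w y j)) x * pd j (fun y => z y k) x +
          u x i * pd k (fun y => w y j) x * pd i (pd j (fun y => z y k)) x +
          pd j (pd k (pd i (fun y => u y i))) x * (w x j * z x k) +
          pd j (pd i (fun y => u y i)) x * (pd k (fun y => w y j) x * z x k) +
          pd j (pd i (fun y => u y i)) x * (w x j * pd k (fun y => z y k) x) +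
          pd k (pd i (fun y => u y i)) x * (pd j (fun y => w y j) x * z x k) +
          pd k (pd i (fun y => u y i)) x * (w x j * pd j (fun y => z y k) x) +
          pd i (fun y => u y i) x * (pd k (pd j (fun y => w y j)) x * z x k) +
          pd i (fun y => u y i) x * (pd j (fun y => w y j) x * pd k (fun y => z y k) x) +
          pd i (fun y => u y i) x * (pd k (fun y => w y j) x * pd j (fun y => z y k) x) +
          pd i (fun y => u y i) x * (w x j * pd j (pd k (fun y => z y k)) x) +
          pd i (pd k (pd j (fun y => w y j))) x * (u x i * z x k) +
          pd i (pd j (fun y => w y j)) x * (pd k (fun y => u y i) x * z x k) +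
          pd i (pd j (fun y => w y j)) x * (u x i * pd k (fun y => z y k) x) +
          pd k (pd j (fun y => w y j)) x * (u x i * pd i (fun y => z y k) x) +
          pd j (fun y => w y j) x * (pd k (fun y => u y i) x * pd i (fun y => z y k) x) +
          pd j (fun y => w y j) x * (u x i * pd i (pd k (fun y => z y k)) x) +
          pd k (fun y => z y k) x * (pd j (fun y => u y i) x * pd i (fun y => w y j) x) +
          pd j (pd k (fun y => z y k)) x * (u x i * pd i (fun y => w y j) x) +
          pd i (pd k (fun y => z y k)) x * (pd j (fun y => u y i) x * w x j) +
          pd i (pd j (pd k (fun y => z y k))) x * (u x i * w x j))) := by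
    refine Finset.sum_congr rfl fun i _ => Finset.sum_congr rfl fun j _ =>
      Finset.sum_congr rfl fun k _ => ?_
    simp (disch := fun_prop) only [pdF_mul, pdF_add]
    rw [pdF_comm (pd_smooth (hU i) k) i j, pdF_comm (hU i) i k, pdF_comm (hU i) i j,
      pdF_comm (hW j) j k]
    ring
  have hR : (∑ i, ∑ j, ∑ k,
        (pd j (fun y => pd k (fun y' => u y' i) y * pd i (fun y' => w y' j) y * z y k +
            pd k (fun y' => u y' i) y * w y j * pd i (fun y' => z y' k) y) x +
          pd i (fun y => pd j (fun y' => u y' i) y * pd k (fun y' => w y' j) y * z y k +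
            u y i * pd k (fun y' => w y' j) y * pd j (fun y' => z y' k) y) x)) =
      (∑ i : Fin 3, ∑ j : Fin 3, ∑ k : Fin 3,
        (pd j (pd k (fun y => u y i)) x * pd i (fun y => w y j) x * z x k +
          pd j (pd k (fun y => u y i)) x * w x j * pd i (fun y => z y k) x +
          pd j (fun y => u y i) x * pd i (pd k (fun y => w y j)) x * z x k +
          pd j (fun y => u y i) x * pd k (fun y => w y j) x * pd i (fun y => z y k) x +
          pd k (fun y => u y i) x * pd i (fun y => w y j) x * pd j (fun y => z y k) x +
          pd k (fun y => u y i) x * w x j * pd i (pd j (fun y => z y k)) x +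
          u x i * pd i (pd k (fun y => w y j)) x * pd j (fun y => z y k) x +
          u x i * pd k (fun y => w y j) x * pd i (pd j (fun y => z y k)) x +
          pd j (pd i (fun y => u y i)) x * (pd k (fun y => w y j) x * z x k) +
          pd i (fun y => u y i) x * (pd k (fun y => w y j) x * pd j (fun y => z y k) x) +
          pd i (pd j (fun y => w y j)) x * (pd k (fun y => u y i) x * z x k) +
          pd j (fun y => w y j) x * (pd k (fun y => u y i) x * pd i (fun y => z y k) x))) := by
    refine Finset.sum_congr rfl fun i _ => Finset.sum_congr rfl fun j _ =>
      Finset.sum_congr rfl fun k _ => ?_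
    simp (disch := fun_prop) only [pdF_mul, pdF_add]
    rw [pdF_comm (hW j) j i, pdF_comm (hU i) i j, pdF_comm (hZ k) j i]
    ring
  rw [hL, hR]
  simp only [Finset.sum_add_distrib]
  have kA1 : (∑ i, ∑ j, ∑ k, pd j (pd k (pd i (fun y => u y i))) x * (w x j * z x k)) = 0 :=
    kill_i _ _ (fun j k => div_deriv2 u hu hdu j k x)
  have kA2 : (∑ i, ∑ j, ∑ k, pd j (pd i (fun y => u y i)) x * (pd k (fun y => w y j) x * z x k)) = 0 :=
    kill_i _ _ (fun j _ => div_deriv1 u hu hdu j x)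
  have kA3 : (∑ i, ∑ j, ∑ k, pd j (pd i (fun y => u y i)) x * (w x j * pd k (fun y => z y k) x)) = 0 :=
    kill_i _ _ (fun j _ => div_deriv1 u hu hdu j x)
  have kA4 : (∑ i, ∑ j, ∑ k, pd k (pd i (fun y => u y i)) x * (pd j (fun y => w y j) x * z x k)) = 0 :=
    kill_i _ _ (fun _ k => div_deriv1 u hu hdu k x)
  have kA5 : (∑ i, ∑ j, ∑ k, pd k (pd i (fun y => u y i)) x * (w x j * pd j (fun y => z y k) x)) = 0 :=
    kill_i _ _ (fun _ k => div_deriv1 u hu hdu k x)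
  have kA6 : (∑ i, ∑ j, ∑ k, pd i (fun y => u y i) x * (pd k (pd j (fun y => w y j)) x * z x k)) = 0 :=
    kill_i _ _ (fun _ _ => hdu x)
  have kA7 : (∑ i, ∑ j, ∑ k, pd i (fun y => u y i) x * (pd j (fun y => w y j) x * pd k (fun y => z y k) x)) = 0 :=
    kill_i _ _ (fun _ _ => hdu x)
  have kA8 : (∑ i, ∑ j, ∑ k, pd i (fun y => u y i) x * (pd k (fun y => w y j) x * pd j (fun y => z y k) x)) = 0 :=
    kill_i _ _ (fun _ _ => hdu x)
  have kA9 : (∑ i, ∑ j, ∑ k, pd i (fun y => u y i) x * (w x j * pd j (pd k (fun y => z y k)) x)) = 0 :=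
    kill_i _ _ (fun _ _ => hdu x)
  have kB1 : (∑ i, ∑ j, ∑ k, pd i (pd k (pd j (fun y => w y j))) x * (u x i * z x k)) = 0 :=
    kill_j _ _ (fun i k => div_deriv2 w hw hdw i k x)
  have kB2 : (∑ i, ∑ j, ∑ k, pd i (pd j (fun y => w y j)) x * (pd k (fun y => u y i) x * z x k)) = 0 :=
    kill_j _ _ (fun i _ => div_deriv1 w hw hdw i x)
  have kB3 : (∑ i, ∑ j, ∑ k, pd i (pd j (fun y => w y j)) x * (u x i * pd k (fun y => z y k) x)) = 0 :=
    kill_j _ _ (fun i _ => div_deriv1 w hw hdw i x)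
  have kB4 : (∑ i, ∑ j, ∑ k, pd k (pd j (fun y => w y j)) x * (u x i * pd i (fun y => z y k) x)) = 0 :=
    kill_j _ _ (fun _ k => div_deriv1 w hw hdw k x)
  have kB5 : (∑ i, ∑ j, ∑ k, pd j (fun y => w y j) x * (pd k (fun y => u y i) x * pd i (fun y => z y k) x)) = 0 :=
    kill_j _ _ (fun _ _ => hdw x)
  have kB6 : (∑ i, ∑ j, ∑ k, pd j (fun y => w y j) x * (u x i * pd i (pd k (fun y => z y k)) x)) = 0 :=
    kill_j _ _ (fun _ _ => hdw x)
  have kC1 : (∑ i, ∑ j, ∑ k, pd k (fun y => z y k) x * (pd j (fun y => u y i) x * pd i (fun y => w y j) x)) = 0 :=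
    kill_k _ _ (fun _ _ => hdz x)
  have kC2 : (∑ i, ∑ j, ∑ k, pd j (pd k (fun y => z y k)) x * (u x i * pd i (fun y => w y j) x)) = 0 :=
    kill_k _ _ (fun _ j => div_deriv1 z hz hdz j x)
  have kC3 : (∑ i, ∑ j, ∑ k, pd i (pd k (fun y => z y k)) x * (pd j (fun y => u y i) x * w x j)) = 0 :=
    kill_k _ _ (fun i _ => div_deriv1 z hz hdz i x)
  have kC4 : (∑ i, ∑ j, ∑ k, pd i (pd j (pd k (fun y => z y k))) x * (u x i * w x j)) = 0 :=
    kill_k _ _ (fun i j => div_deriv2 z hz hdz i j x)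
  rw [kA1, kA2, kA3, kA4, kA5, kA6, kA7, kA8, kA9, kB1, kB2, kB3, kB4, kB5, kB6,
    kC1, kC2, kC3, kC4]
  ring
end
end
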